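/- Suppose f : ℂP¹ → ℂP¹ and f′ : ℂP¹ → ℂP¹ are the rational maps induced by polynomials P_{a} and P_{a′} (antiderivatives of ζ²(ζ−1)³∏(ζ−a_j) resp. ζ²(ζ−1)³∏(ζ−a′_j)), with all parameters satisfying |a_j − 2j| < 1 and |a′_j − 2j| < 1. If there is a Möbius transformation μ with f′ = f ∘ μ sending the critical set of f′ to that of f preserving multiplicities, then μ fixes 0, 1, ∞ (being the unique critical points of multiplicities 2, 3, N+5 respectively), hence μ = id and a = a′. -/

import Mathlib

/-!
The finite critical points of `P_a` are the roots of `ζ²(ζ−1)³∏(ζ−a_j)`. The disks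
`|ζ − 2j| < 1` lie in `Re ζ > 1` and are pairwise disjoint, so the `a_j` are simple roots
distinct from `0` and `1`. Hence `0`, `1`, `∞` are the only critical points of multiplicity
`2`, `3`, `N + 5`, and a multiplicity-preserving Möbius map fixes all three, so it is the
identity. Then `P_a = P_{a'}`, and as each `a_j` lies in its own disk, comparing the roots of the
derivatives gives `a = a'`.
-/

open Polynomial OnePoint

section CritPoly

variable {K ι : Type*} [Field K] [Fintype ι] {b : ι → K} {w : K}

noncomputable def critPoly (b : ι → K) : K[X] := X ^ 2 * (X - 1) ^ 3 * ∏ j, (X - C (b j))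

theorem roots_critPoly (b : ι → K) :
    (critPoly b).roots = 2 • {0} + 3 • {1} + Finset.univ.val.map b := by
  have : critPoly b =
      ((2 • {0} + 3 • {1} + Finset.univ.val.map b).map fun x => X - C x).prod := by
    simp [critPoly, Multiset.map_nsmul, Multiset.prod_nsmul]
  rw [this, roots_multiset_prod_X_sub_C]

theorem rootMultiplicity_critPoly_zero (h0 : ∀ j, b j ≠ 0) :
    rootMultiplicity 0 (critPoly b) = 2 := by
  classical
  rw [← count_roots, roots_critPoly]
  simp [h0]

theorem rootMultiplicity_critPoly_one (h1 : ∀ j, b j ≠ 1) :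
    rootMultiplicity 1 (critPoly b) = 3 := by
  classical
  rw [← count_roots, roots_critPoly]
  simp [h1]

theorem rootMultiplicity_critPoly_le_one (hb : Function.Injective b) (hw0 : w ≠ 0)
    (hw1 : w ≠ 1) :
    rootMultiplicity w (critPoly b) ≤ 1 := by
  classical
  rw [← count_roots, roots_critPoly]
  simpa [Multiset.count_singleton, hw0, hw1] using
    Multiset.nodup_iff_count_le_one.mp (Finset.univ.nodup.map hb) w

theorem rootMultiplicity_critPoly_cases (h0 : ∀ j, b j ≠ 0) (h1 : ∀ j, b j ≠ 1)
    (hb : Function.Injective b) (w : K) :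
    (w = 0 ∧ rootMultiplicity w (critPoly b) = 2) ∨
      (w = 1 ∧ rootMultiplicity w (critPoly b) = 3) ∨ rootMultiplicity w (critPoly b) ≤ 1 := by
  by_cases hw0 : w = 0
  · exact .inl ⟨hw0, hw0 ▸ rootMultiplicity_critPoly_zero h0⟩
  by_cases hw1 : w = 1
  · exact .inr (.inl ⟨hw1, hw1 ▸ rootMultiplicity_critPoly_one h1⟩)
  exact .inr (.inr (rootMultiplicity_critPoly_le_one hb hw0 hw1))

theorem eq_of_critPoly_eq {b' : ι → K} (hsep : ∀ i j, b i = b' j → i = j)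
    (h : critPoly b = critPoly b') : b = b' := by
  have hmap : Finset.univ.val.map b = Finset.univ.val.map b' :=
    add_left_cancel (by rw [← roots_critPoly, ← roots_critPoly, h])
  funext j
  obtain ⟨i, -, hi⟩ :=
    Multiset.mem_map.mp (hmap ▸ Multiset.mem_map_of_mem b (Finset.mem_univ_val j))
  rw [← hi, hsep j i hi.symm]

noncomputable def critMult (b : ι → K) (n : ℕ) (z : OnePoint K) : ℕ :=
  z.elim n fun w => rootMultiplicity w (critPoly b)

@[simp]
theorem critMult_infty (b : ι → K) (n : ℕ) : critMult b n ∞ = n := rfl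

@[simp]
theorem critMult_coe (b : ι → K) (n : ℕ) (w : K) :
    critMult b n w = rootMultiplicity w (critPoly b) := rfl

theorem eq_critMult {n : ℕ} {p : K[X]} {m : OnePoint K → ℕ} (hp : p = critPoly b)
    (hinf : m ∞ = n) (hfin : ∀ w : K, m w = rootMultiplicity w p) : m = critMult b n := by
  funext z
  induction z using OnePoint.rec with
  | infty => exact hinf
  | coe w => rw [hfin, hp, critMult_coe]

theorem eq_infty_of_critMult_eq (h0 : ∀ j, b j ≠ 0) (h1 : ∀ j, b j ≠ 1)
    (hb : Function.Injective b) {n : ℕ} (hn : 3 < n) {z : OnePoint K}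
    (h : critMult b n z = n) : z = ∞ := by
  induction z using OnePoint.rec with
  | infty => rfl
  | coe w =>
    rw [critMult_coe] at h
    rcases rootMultiplicity_critPoly_cases h0 h1 hb w with ⟨-, hw⟩ | ⟨-, hw⟩ | hw <;> omega

theorem eq_zero_of_critMult_eq_two (h0 : ∀ j, b j ≠ 0) (h1 : ∀ j, b j ≠ 1)
    (hb : Function.Injective b) {n : ℕ} (hn : n ≠ 2) {z : OnePoint K}
    (h : critMult b n z = 2) : z = (0 : K) := by
  induction z using OnePoint.rec with
  | infty => exact absurd h hn
  | coe w =>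
    rw [critMult_coe] at h
    rcases rootMultiplicity_critPoly_cases h0 h1 hb w with ⟨rfl, -⟩ | ⟨-, hw⟩ | hw
    · rfl
    · omega
    · omega

theorem eq_one_of_critMult_eq_three (h0 : ∀ j, b j ≠ 0) (h1 : ∀ j, b j ≠ 1)
    (hb : Function.Injective b) {n : ℕ} (hn : n ≠ 3) {z : OnePoint K}
    (h : critMult b n z = 3) : z = (1 : K) := by
  induction z using OnePoint.rec with
  | infty => exact absurd h hn
  | coe w =>
    rw [critMult_coe] at h
    rcases rootMultiplicity_critPoly_cases h0 h1 hb w with ⟨-, hw⟩ | ⟨rfl, -⟩ | hw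
    · omega
    · rfl
    · omega

end CritPoly

def IsMoebius (μ : OnePoint ℂ → OnePoint ℂ) : Prop :=
  ∃ α β γ δ : ℂ, α * δ - β * γ ≠ 0 ∧
      (∀ z : ℂ, (γ * z + δ ≠ 0 →
          μ (z : OnePoint ℂ) = (((α * z + β) / (γ * z + δ) : ℂ) : OnePoint ℂ)) ∧
        (γ * z + δ = 0 → μ (z : OnePoint ℂ) = ∞)) ∧
      (γ = 0 → μ ∞ = ∞) ∧ (γ ≠ 0 → μ ∞ = ((α / γ : ℂ) : OnePoint ℂ))

theorem IsMoebius.eq_self_of_fixes {μ : OnePoint ℂ → OnePoint ℂ} (hμ : IsMoebius μ)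
    (hinf : μ ∞ = ∞) (h0 : μ (0 : ℂ) = (0 : ℂ)) (h1 : μ (1 : ℂ) = (1 : ℂ)) (z : OnePoint ℂ) :
    μ z = z := by
  obtain ⟨α, β, γ, δ, hdet, hfin, -, hγinf⟩ := hμ
  obtain rfl : γ = 0 := by
    by_contra hγ
    exact OnePoint.coe_ne_infty _ ((hγinf hγ).symm.trans hinf)
  have hδ : δ ≠ 0 := right_ne_zero_of_mul (by simpa using hdet)
  have hμz : ∀ w : ℂ, μ w = ((α * w + β) / δ : ℂ) := fun w => by
    simpa using (hfin w).1 (by simpa using hδ)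
  have hβ : β = 0 := by simpa [hμz, hδ] using h0
  have hα : α = δ := by simpa [hμz, hβ, div_eq_one_iff_eq hδ] using h1
  induction z using OnePoint.rec with
  | infty => exact hinf
  | coe w => rw [hμz, hβ, hα, add_zero, mul_div_cancel_left₀ w hδ]

theorem abs_re_sub_lt_one {b : ℂ} {j : ℕ} (h : ‖b - 2 * ((j : ℂ) + 1)‖ < 1) :
    |b.re - 2 * (j + 1)| < 1 := by
  refine lt_of_le_of_lt (le_of_eq_of_le ?_ (Complex.abs_re_le_norm _)) h
  simp

theorem one_lt_re_of_norm_sub_lt_one {b : ℂ} {j : ℕ} (h : ‖b - 2 * ((j : ℂ) + 1)‖ < 1) :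
    1 < b.re := by
  have := (abs_lt.mp (abs_re_sub_lt_one h)).1
  have : (0 : ℝ) ≤ j := j.cast_nonneg
  linarith

theorem le_of_norm_sub_lt_one {b : ℂ} {i j : ℕ} (hi : ‖b - 2 * ((i : ℂ) + 1)‖ < 1)
    (hj : ‖b - 2 * ((j : ℂ) + 1)‖ < 1) : i ≤ j := by
  have hi' := (abs_lt.mp (abs_re_sub_lt_one hi)).1
  have hj' := (abs_lt.mp (abs_re_sub_lt_one hj)).2
  have : (i : ℝ) < j + 1 := by linarith
  exact Nat.lt_succ_iff.mp (by exact_mod_cast this)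

theorem eq_of_norm_sub_lt_one {b : ℂ} {i j : ℕ} (hi : ‖b - 2 * ((i : ℂ) + 1)‖ < 1)
    (hj : ‖b - 2 * ((j : ℂ) + 1)‖ < 1) : i = j :=
  le_antisymm (le_of_norm_sub_lt_one hi hj) (le_of_norm_sub_lt_one hj hi)

theorem ne_zero_of_norm_sub_lt_one {b : ℂ} {j : ℕ} (h : ‖b - 2 * ((j : ℂ) + 1)‖ < 1) :
    b ≠ 0 := by
  rintro rfl
  have := one_lt_re_of_norm_sub_lt_one h
  norm_num at this

theorem ne_one_of_norm_sub_lt_one {b : ℂ} {j : ℕ} (h : ‖b - 2 * ((j : ℂ) + 1)‖ < 1) :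
    b ≠ 1 := by
  rintro rfl
  have := one_lt_re_of_norm_sub_lt_one h
  norm_num at this

theorem stmt_19_general (N : ℕ) (a a' : Fin N → ℂ)
    (ha : ∀ j : Fin N, ‖a j - 2 * ((j : ℕ) + 1)‖ < 1)
    (ha' : ∀ j : Fin N, ‖a' j - 2 * ((j : ℕ) + 1)‖ < 1)
    (P P' : Polynomial ℂ)
    (hP : P.derivative = X ^ 2 * (X - 1) ^ 3 * ∏ j : Fin N, (X - C (a j)))
    (hP' : P'.derivative = X ^ 2 * (X - 1) ^ 3 * ∏ j : Fin N, (X - C (a' j)))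
    (f f' : OnePoint ℂ → OnePoint ℂ)
    (hffin : ∀ z : ℂ, f (z : OnePoint ℂ) = ((P.eval z : ℂ) : OnePoint ℂ))
    (hf'fin : ∀ z : ℂ, f' (z : OnePoint ℂ) = ((P'.eval z : ℂ) : OnePoint ℂ))
    (μ : OnePoint ℂ → OnePoint ℂ)
    (hμ : ∃ α β γ δ : ℂ, α * δ - β * γ ≠ 0 ∧
      (∀ z : ℂ, (γ * z + δ ≠ 0 →
          μ (z : OnePoint ℂ) = (((α * z + β) / (γ * z + δ) : ℂ) : OnePoint ℂ)) ∧
        (γ * z + δ = 0 → μ (z : OnePoint ℂ) = ∞)) ∧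
      (γ = 0 → μ ∞ = ∞) ∧ (γ ≠ 0 → μ ∞ = ((α / γ : ℂ) : OnePoint ℂ)))
    (hcomp : ∀ z : OnePoint ℂ, f' z = f (μ z))
    (m m' : OnePoint ℂ → ℕ)
    (hminf : m ∞ = N + 5)
    (hmfin : ∀ z : ℂ, m (z : OnePoint ℂ) = Polynomial.rootMultiplicity z P.derivative)
    (hm'inf : m' ∞ = N + 5)
    (hm'fin : ∀ z : ℂ, m' (z : OnePoint ℂ) = Polynomial.rootMultiplicity z P'.derivative)
    (hcrit : ∀ z : OnePoint ℂ, m' z = m (μ z)) :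
    μ ((0 : ℂ) : OnePoint ℂ) = ((0 : ℂ) : OnePoint ℂ) ∧
    μ ((1 : ℂ) : OnePoint ℂ) = ((1 : ℂ) : OnePoint ℂ) ∧
    μ ∞ = ∞ ∧ (∀ z : OnePoint ℂ, μ z = z) ∧ a = a' := by
  have ha0 j : a j ≠ 0 := ne_zero_of_norm_sub_lt_one (ha j)
  have ha1 j : a j ≠ 1 := ne_one_of_norm_sub_lt_one (ha j)
  have hinj : Function.Injective a := fun i j h =>
    Fin.ext (eq_of_norm_sub_lt_one (ha i) (h ▸ ha j))
  have hsep i j (h : a i = a' j) : i = j := Fin.ext (eq_of_norm_sub_lt_one (ha i) (h ▸ ha' j))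
  have hm : m = critMult a (N + 5) := eq_critMult hP hminf hmfin
  have hm' : m' = critMult a' (N + 5) := eq_critMult hP' hm'inf hm'fin
  have hμinf : μ ∞ = ∞ := eq_infty_of_critMult_eq ha0 ha1 hinj (by omega : 3 < N + 5)
    (by rw [← hm, ← hcrit, hm', critMult_infty])
  have hμ0 : μ (0 : ℂ) = (0 : ℂ) :=
    eq_zero_of_critMult_eq_two ha0 ha1 hinj (by omega : N + 5 ≠ 2)
    (by rw [← hm, ← hcrit, hm', critMult_coe,
      rootMultiplicity_critPoly_zero fun j => ne_zero_of_norm_sub_lt_one (ha' j)])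
  have hμ1 : μ (1 : ℂ) = (1 : ℂ) :=
    eq_one_of_critMult_eq_three ha0 ha1 hinj (by omega : N + 5 ≠ 3)
    (by rw [← hm, ← hcrit, hm', critMult_coe,
      rootMultiplicity_critPoly_one fun j => ne_one_of_norm_sub_lt_one (ha' j)])
  have hid := IsMoebius.eq_self_of_fixes hμ hμinf hμ0 hμ1
  have hPP : P = P' := Polynomial.funext fun z => by
    simpa [hid, hffin, hf'fin] using (hcomp z).symm
  exact ⟨hμ0, hμ1, hμinf, hid, eq_of_critPoly_eq hsep (hP.symm.trans (hPP ▸ hP'))⟩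

/-- let `f, f' : ℂP¹ → ℂP¹` be the extensions (by `∞ ↦ ∞`) of the
antiderivatives `P_a, P_{a'}` of `ζ²(ζ−1)³∏(ζ−a_j)` resp. `ζ²(ζ−1)³∏(ζ−a'_j)`,
with `|a_j − 2j| < 1` and `|a'_j − 2j| < 1`.  Let `m, m'` be the critical
multiplicity functions (`m(z)` = multiplicity of `z` as a root of `P'_a` at
finite points, `m(∞) = N+5`).  If `μ` is a Möbius transformation with
`f' = f ∘ μ` sending the critical set of `f'` to that of `f` preserving
multiplicities (`m' = m ∘ μ`), then `μ` fixes `0`, `1` and `∞` (these being the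
unique critical points of multiplicities `2`, `3`, `N+5`), hence `μ = id` and
`a = a'`. -/
theorem stmt_19 (N : ℕ) (a a' : Fin N → ℂ)
    (ha : ∀ j : Fin N, ‖a j - 2 * ((j : ℕ) + 1)‖ < 1)
    (ha' : ∀ j : Fin N, ‖a' j - 2 * ((j : ℕ) + 1)‖ < 1)
    (P P' : Polynomial ℂ)
    (hP0 : P.eval 0 = 0)
    (hP : P.derivative = X ^ 2 * (X - 1) ^ 3 * ∏ j : Fin N, (X - C (a j)))
    (hP'0 : P'.eval 0 = 0)
    (hP' : P'.derivative = X ^ 2 * (X - 1) ^ 3 * ∏ j : Fin N, (X - C (a' j)))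
    (f f' : OnePoint ℂ → OnePoint ℂ)
    (hfinf : f ∞ = ∞) (hffin : ∀ z : ℂ, f (z : OnePoint ℂ) = ((P.eval z : ℂ) : OnePoint ℂ))
    (hf'inf : f' ∞ = ∞) (hf'fin : ∀ z : ℂ, f' (z : OnePoint ℂ) = ((P'.eval z : ℂ) : OnePoint ℂ))
    (μ : OnePoint ℂ → OnePoint ℂ)
    (hμ : ∃ α β γ δ : ℂ, α * δ - β * γ ≠ 0 ∧
      (∀ z : ℂ, (γ * z + δ ≠ 0 →
          μ (z : OnePoint ℂ) = (((α * z + β) / (γ * z + δ) : ℂ) : OnePoint ℂ)) ∧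
        (γ * z + δ = 0 → μ (z : OnePoint ℂ) = ∞)) ∧
      (γ = 0 → μ ∞ = ∞) ∧ (γ ≠ 0 → μ ∞ = ((α / γ : ℂ) : OnePoint ℂ)))
    (hcomp : ∀ z : OnePoint ℂ, f' z = f (μ z))
    (m m' : OnePoint ℂ → ℕ)
    (hminf : m ∞ = N + 5)
    (hmfin : ∀ z : ℂ, m (z : OnePoint ℂ) = Polynomial.rootMultiplicity z P.derivative)
    (hm'inf : m' ∞ = N + 5)
    (hm'fin : ∀ z : ℂ, m' (z : OnePoint ℂ) = Polynomial.rootMultiplicity z P'.derivative)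
    (hcrit : ∀ z : OnePoint ℂ, m' z = m (μ z)) :
    μ ((0 : ℂ) : OnePoint ℂ) = ((0 : ℂ) : OnePoint ℂ) ∧
    μ ((1 : ℂ) : OnePoint ℂ) = ((1 : ℂ) : OnePoint ℂ) ∧
    μ ∞ = ∞ ∧ (∀ z : OnePoint ℂ, μ z = z) ∧ a = a' :=
  stmt_19_general N a a' ha ha' P P' hP hP' f f' hffin hf'fin μ hμ hcomp m m' hminf hmfin hm'inf
    hm'fin hcrit
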